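/- Let μ > 1 and let A = diag(1, μ⁻¹, μ, 1) ∈ ℝ^{4×4}, partitioned with k = 2 blocks A11 = diag(1, μ⁻¹), A12 = 0, A21 = 0, A22 = diag(μ, 1). Then: (a) σ_2(A) = 1 = μ·σ_2(A11); (b) the Schur complement S(A11) = A22 satisfies ‖S(A11)‖₂ = μ = μ·σ_3(A); (c) ‖A21A11⁻¹‖_max = ‖A11⁻¹A12‖_max = 0; and yet (d) the 2×2 submatrix A([1,3],[1,3]) = diag(1, μ), which differs from A11 in one row and one column, satisfies vol(A([1,3],[1,3])) = μ²·vol(A11). In particular, A11 is not a γ-local maximum volume 2×2 submatrix of A for any γ < μ². -/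

import Mathlib

open Matrix

/-- The spectral norm (`‖·‖₂`, largest singular value) of a real matrix. -/
noncomputable def specNorm {m n : Type*} [Fintype m] [Fintype n] [DecidableEq n]
    (A : Matrix m n ℝ) : ℝ :=
  ‖LinearMap.toContinuousLinearMap (Matrix.toEuclideanLin A)‖

/-- `sval A j` is the `j`-th largest singular value of `A` (1-indexed), characterized as the
distance, in the spectral norm, from `A` to the set of matrices of rank `< j`. -/
noncomputable def sval {m n : Type*} [Fintype m] [Fintype n] [DecidableEq n]
    (A : Matrix m n ℝ) (j : ℕ) : ℝ :=
  sInf {x : ℝ | ∃ B : Matrix m n ℝ, B.rank < j ∧ x = specNorm (A - B)}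

/-- The volume of a matrix: the product of its singular values. -/
noncomputable def vol {m n : Type*} [Fintype m] [Fintype n] [DecidableEq n]
    (A : Matrix m n ℝ) : ℝ :=
  ∏ j ∈ Finset.Icc 1 (min (Fintype.card m) (Fintype.card n)), sval A j

/-- `DiffOne b r` : `r` is an injective selection of indices whose image (index set)
differs from the index set selected by `b` in at most one element. -/
def DiffOne {ι α : Type*} [Fintype ι] [DecidableEq α] (b r : ι → α) : Prop :=
  Function.Injective r ∧ (Finset.univ.image r \ Finset.univ.image b).card ≤ 1

noncomputable def dA11 (μ : ℝ) : Matrix (Fin 2) (Fin 2) ℝ := Matrix.diagonal ![1, μ⁻¹]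

noncomputable def dA22 (μ : ℝ) : Matrix (Fin 2) (Fin 2) ℝ := Matrix.diagonal ![μ, 1]

/-- A = diag(1, μ⁻¹, μ, 1) written in 2×2 block form. -/
noncomputable def dA (μ : ℝ) : Matrix (Fin 2 ⊕ Fin 2) (Fin 2 ⊕ Fin 2) ℝ :=
  Matrix.fromBlocks (dA11 μ) 0 0 (dA22 μ)

/-! For a diagonal matrix, the `j`-th singular value (the spectral-norm distance to the matrices
of rank `< j`) is the `j`-th largest modulus of a diagonal entry: zeroing the `j - 1` largest
entries gives the upper bound, and any matrix of rank `< j` kills a nonzero vector supported on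
`j` entries of modulus `≥ σ`, which `diagonal d` stretches by at least `σ`. Every claim then
reduces to reading off the entries of `diag(1, μ⁻¹, μ, 1)` and of its principal submatrices
`diag(1, μ⁻¹)` and `diag(1, μ)`. -/

open scoped Matrix.Norms.L2Operator

theorem exists_ne_zero_supported_mulVec_eq_zero {m n : Type*} [Fintype n] (B : Matrix m n ℝ)
    (t : Finset n) (h : B.rank < t.card) :
    ∃ x : n → ℝ, x ≠ 0 ∧ (∀ i ∉ t, x i = 0) ∧ B *ᵥ x = 0 := by
  set E := Function.ExtendByZero.linearMap ℝ ((↑) : t → n)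
  set f := B.mulVecLin ∘ₗ E
  have hker : LinearMap.ker f ≠ ⊥ := by
    intro hbot
    have hrange : Module.finrank ℝ (LinearMap.range f) ≤ B.rank :=
      Submodule.finrank_mono (LinearMap.range_comp_le_range _ _)
    have := f.finrank_range_add_finrank_ker
    rw [hbot, finrank_bot, Module.finrank_fintype_fun_eq_card, Fintype.card_coe] at this
    omega
  obtain ⟨y, hy, hy0⟩ := Submodule.exists_mem_ne_zero_of_ne_bot hker
  refine ⟨E y, fun hEy => hy0 ?_, fun i hi => ?_, hy⟩
  · exact Function.extend_injective Subtype.val_injective (0 : n → ℝ)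
      (hEy.trans (map_zero E).symm)
  · exact Function.extend_apply' _ _ _ (by rintro ⟨⟨k, hk⟩, rfl⟩; exact hi hk)

section SingularValues

variable {m n : Type*} [Fintype m] [Fintype n] [DecidableEq n]

theorem sval_le_specNorm_sub (A B : Matrix m n ℝ) {j : ℕ} (hB : B.rank < j) :
    sval A j ≤ specNorm (A - B) :=
  csInf_le ⟨0, fun _ ⟨_, _, hx⟩ => hx ▸ norm_nonneg _⟩ ⟨B, hB, rfl⟩

theorem specNorm_diagonal (d : n → ℝ) : specNorm (diagonal d) = ‖d‖ :=
  l2_opNorm_diagonal d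

theorem sval_diagonal_le (d : n → ℝ) (s : Finset n) {j : ℕ} (hs : s.card < j) {σ : ℝ}
    (hσ : 0 ≤ σ) (h : ∀ i ∉ s, |d i| ≤ σ) : sval (diagonal d) j ≤ σ := by
  have hrank : (diagonal fun i => if i ∈ s then d i else 0).rank < j := by
    refine lt_of_le_of_lt ?_ hs
    rw [rank_diagonal, Fintype.card_subtype]
    exact Finset.card_le_card fun i hi => by by_contra his; simp [his] at hi
  calc sval (diagonal d) j
      ≤ specNorm (diagonal d - diagonal fun i => if i ∈ s then d i else 0) :=
        sval_le_specNorm_sub _ _ hrank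
    _ = ‖fun i => if i ∈ s then 0 else d i‖ := by
        rw [diagonal_sub, specNorm_diagonal]
        congr 1
        ext i
        split_ifs <;> simp
    _ ≤ σ := (pi_norm_le_iff_of_nonneg hσ).2 fun i => by
        split_ifs with hi
        · simpa using hσ
        · exact h i hi

theorem le_sval_diagonal (d : n → ℝ) (t : Finset n) {j : ℕ} (hj : 0 < j) (ht : j ≤ t.card)
    {σ : ℝ} (hσ : 0 ≤ σ) (h : ∀ i ∈ t, σ ≤ |d i|) : σ ≤ sval (diagonal d) j := by
  refine le_csInf ⟨_, 0, by rwa [rank_zero], rfl⟩ ?_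
  rintro _ ⟨B, hB, rfl⟩
  obtain ⟨x, hx0, hxt, hBx⟩ := exists_ne_zero_supported_mulVec_eq_zero B t (hB.trans_le ht)
  set v := (EuclideanSpace.equiv n ℝ).symm x
  have hv : 0 < ‖v‖ := norm_pos_iff.2 fun h0 => hx0 (by simpa [v] using h0)
  have hdiag : σ * ‖v‖ ≤ ‖(EuclideanSpace.equiv n ℝ).symm (diagonal d *ᵥ x)‖ := by
    refine (sq_le_sq₀ (by positivity) (norm_nonneg _)).1 ?_
    rw [mul_pow, EuclideanSpace.norm_sq_eq, EuclideanSpace.norm_sq_eq, Finset.mul_sum]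
    refine Finset.sum_le_sum fun i _ => ?_
    by_cases hi : i ∈ t
    · change σ ^ 2 * ‖x i‖ ^ 2 ≤ ‖(diagonal d *ᵥ x) i‖ ^ 2
      rw [mulVec_diagonal, norm_mul, mul_pow, Real.norm_eq_abs (d i)]
      gcongr
      exact h i hi
    · simp [v, mulVec_diagonal, hxt i hi]
  have hB0 : (diagonal d - B) *ᵥ x = diagonal d *ᵥ x := by rw [sub_mulVec, hBx, sub_zero]
  have hop : ‖(EuclideanSpace.equiv n ℝ).symm (diagonal d *ᵥ x)‖ ≤
      specNorm (diagonal d - B) * ‖v‖ :=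
    hB0 ▸ l2_opNorm_mulVec (diagonal d - B) v
  exact le_of_mul_le_mul_right (hdiag.trans hop) hv

theorem sval_diagonal_eq (d : n → ℝ) (s t : Finset n) {j : ℕ} (hs : s.card < j)
    (ht : j ≤ t.card) {σ : ℝ} (hσ : 0 ≤ σ) (hs' : ∀ i ∉ s, |d i| ≤ σ)
    (ht' : ∀ i ∈ t, σ ≤ |d i|) : sval (diagonal d) j = σ :=
  le_antisymm (sval_diagonal_le d s hs hσ hs') (le_sval_diagonal d t (by omega) ht hσ ht')

end SingularValues

theorem sval_one_diagonal_fin_two (a b : ℝ) : sval (diagonal ![a, b]) 1 = max |a| |b| := by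
  rcases le_total |b| |a| with hab | hab
  · rw [max_eq_left hab]
    exact sval_diagonal_eq _ ∅ {0} (by simp) (by simp) (abs_nonneg a)
      (by simp [Fin.forall_fin_two, hab]) (by simp)
  · rw [max_eq_right hab]
    exact sval_diagonal_eq _ ∅ {1} (by simp) (by simp) (abs_nonneg b)
      (by simp [Fin.forall_fin_two, hab]) (by simp)

theorem sval_two_diagonal_fin_two (a b : ℝ) : sval (diagonal ![a, b]) 2 = min |a| |b| := by
  rcases le_total |b| |a| with hab | hab
  · rw [min_eq_right hab]
    exact sval_diagonal_eq _ {0} Finset.univ (by simp) (by simp) (abs_nonneg b)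
      (by simp [Fin.forall_fin_two]) (by simp [Fin.forall_fin_two, hab])
  · rw [min_eq_left hab]
    exact sval_diagonal_eq _ {1} Finset.univ (by simp) (by simp) (abs_nonneg a)
      (by simp [Fin.forall_fin_two]) (by simp [Fin.forall_fin_two, hab])

theorem vol_fin_two (A : Matrix (Fin 2) (Fin 2) ℝ) : vol A = sval A 1 * sval A 2 := by
  have hrange : Finset.Icc 1 (min (Fintype.card (Fin 2)) (Fintype.card (Fin 2))) = {1, 2} := by
    decide
  rw [vol, hrange, Finset.prod_pair (by decide)]

theorem vol_diagonal_fin_two (a b : ℝ) : vol (diagonal ![a, b]) = |a| * |b| := by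
  rw [vol_fin_two, sval_one_diagonal_fin_two, sval_two_diagonal_fin_two, max_mul_min]

theorem dA_eq_diagonal (μ : ℝ) : dA μ = diagonal (Sum.elim ![1, μ⁻¹] ![μ, 1]) := by
  rw [dA, dA11, dA22, fromBlocks_diagonal]

theorem sval_dA {μ : ℝ} (hμ : 1 < μ) {j : ℕ} (h2 : 2 ≤ j) (h3 : j ≤ 3) :
    sval (dA μ) j = 1 := by
  have hμ0 : 0 < μ := zero_lt_one.trans hμ
  have hμinv : μ⁻¹ ≤ 1 := inv_le_one_of_one_le₀ hμ.le
  rw [dA_eq_diagonal]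
  refine sval_diagonal_eq _ {Sum.inr 0} {Sum.inl 0, Sum.inr 0, Sum.inr 1} (by simp; omega)
    (by simp; omega) zero_le_one ?_ ?_
  · rintro (i | i) hi <;> fin_cases i <;> simp_all [abs_of_pos hμ0]
  · rintro (i | i) hi <;> fin_cases i <;> simp_all [abs_of_pos hμ0, hμ.le]

theorem submatrix_dA (μ : ℝ) :
    (dA μ).submatrix ![Sum.inl 0, Sum.inr 0] ![Sum.inl 0, Sum.inr 0] = diagonal ![1, μ] := by
  rw [dA_eq_diagonal, submatrix_diagonal _ _ (by decide)]
  congr 1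
  ext i
  fin_cases i <;> rfl

theorem sval_two_dA11 {μ : ℝ} (hμ : 1 < μ) : sval (dA11 μ) 2 = μ⁻¹ := by
  have hμ0 : 0 < μ := zero_lt_one.trans hμ
  rw [dA11, sval_two_diagonal_fin_two, abs_one, abs_of_pos (inv_pos.2 hμ0)]
  exact min_eq_right (inv_le_one_of_one_le₀ hμ.le)

theorem vol_dA11 {μ : ℝ} (hμ : 0 < μ) : vol (dA11 μ) = μ⁻¹ := by
  rw [dA11, vol_diagonal_fin_two, abs_one, one_mul, abs_of_pos (inv_pos.2 hμ)]

theorem vol_submatrix_dA {μ : ℝ} (hμ : 0 < μ) :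
    vol ((dA μ).submatrix ![Sum.inl 0, Sum.inr 0] ![Sum.inl 0, Sum.inr 0]) = μ := by
  rw [submatrix_dA, vol_diagonal_fin_two, abs_one, one_mul, abs_of_pos hμ]

theorem specNorm_dA22 {μ : ℝ} (hμ : 1 ≤ μ) : specNorm (dA22 μ) = μ := by
  have hμ0 : 0 < μ := zero_lt_one.trans_le hμ
  rw [dA22, specNorm_diagonal]
  refine le_antisymm ((pi_norm_le_iff_of_nonneg hμ0.le).2 ?_) ?_
  · simp [Fin.forall_fin_two, abs_of_pos hμ0, hμ]
  · simpa [abs_of_pos hμ0] using norm_le_pi_norm (![μ, 1] : Fin 2 → ℝ) 0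

theorem statement_17 (μ : ℝ) (hμ : 1 < μ) :
    (sval (dA μ) 2 = 1 ∧ 1 = μ * sval (dA11 μ) 2) ∧
    (specNorm (dA22 μ - (0 : Matrix (Fin 2) (Fin 2) ℝ) * (dA11 μ)⁻¹ *
        (0 : Matrix (Fin 2) (Fin 2) ℝ)) = μ ∧
      μ = μ * sval (dA μ) 3) ∧
    ((∀ i j, ((0 : Matrix (Fin 2) (Fin 2) ℝ) * (dA11 μ)⁻¹) i j = 0) ∧
      (∀ i j, ((dA11 μ)⁻¹ * (0 : Matrix (Fin 2) (Fin 2) ℝ)) i j = 0)) ∧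
    (vol ((dA μ).submatrix ![Sum.inl 0, Sum.inr 0] ![Sum.inl 0, Sum.inr 0]) =
      μ ^ 2 * vol (dA11 μ)) ∧
    (∀ γ : ℝ, 1 ≤ γ → γ < μ ^ 2 →
      ¬ (∀ (r c : Fin 2 → Fin 2 ⊕ Fin 2), DiffOne Sum.inl r → DiffOne Sum.inl c →
        vol ((dA μ).submatrix r c) ≤ γ * vol (dA11 μ))) := by
  have hμ0 : 0 < μ := zero_lt_one.trans hμ
  have hvol : vol ((dA μ).submatrix ![Sum.inl 0, Sum.inr 0] ![Sum.inl 0, Sum.inr 0]) =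
      μ ^ 2 * vol (dA11 μ) := by
    rw [vol_submatrix_dA hμ0, vol_dA11 hμ0]
    field_simp
  refine ⟨⟨sval_dA hμ le_rfl (by norm_num), ?_⟩, ⟨?_, ?_⟩, ⟨by simp, by simp⟩, hvol, ?_⟩
  · rw [sval_two_dA11 hμ, mul_inv_cancel₀ hμ0.ne']
  · rw [Matrix.zero_mul, Matrix.zero_mul, sub_zero, specNorm_dA22 hμ.le]
  · rw [sval_dA hμ (by norm_num) le_rfl, mul_one]
  · intro γ _ hγ hmax
    have hsel : DiffOne Sum.inl (![Sum.inl 0, Sum.inr 0] : Fin 2 → Fin 2 ⊕ Fin 2) :=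
      ⟨by decide, by decide⟩
    have hle := hmax _ _ hsel hsel
    rw [hvol] at hle
    have hvol11 : 0 < vol (dA11 μ) := by rw [vol_dA11 hμ0]; positivity
    exact hle.not_gt (mul_lt_mul_of_pos_right hγ hvol11)
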